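/- arXiv:2210.17276 — 2 statements merged into one kernel-verified Lean document; each statement's English description precedes it below -/
import Mathlib

section
/- The Hermite polynomials have the exponential generating function identity: for all real c and x, exp(cx − c²/2) = Σ_{n=0}^∞ (cⁿ/n!)·h_n(x), with the series converging absolutely. -/
/-- Probabilists' Hermite polynomials via the Rodrigues formula
`h_n(x) = (−1)ⁿ e^{x²/2} (dⁿ/dxⁿ)(e^{−x²/2})`. -/
noncomputable def hermite (n : ℕ) (x : ℝ) : ℝ :=
  (-1)^n * Real.exp (x^2/2) * iteratedDeriv n (fun y => Real.exp (-y^2/2)) x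

lemma hermite_eq_aeval (n : ℕ) (x : ℝ) :
    hermite n x = Polynomial.aeval x (Polynomial.hermite n) := by
  have hfun : (fun y : ℝ => Real.exp (-y^2/2)) = fun y : ℝ => Real.exp (-(y^2/2)) := by
    funext y; rw [neg_div]
  rw [hermite, hfun, iteratedDeriv_eq_iterate, Polynomial.deriv_gaussian_eq_hermite_mul_gaussian]
  have h1 : ((-1 : ℝ)^n) * ((-1 : ℝ)^n) = 1 := by
    rw [← mul_pow]; norm_num
  have h2 : Real.exp (x^2/2) * Real.exp (-(x^2/2)) = 1 := by
    rw [← Real.exp_add]; ring_nf; exact Real.exp_zero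
  calc ((-1:ℝ))^n * Real.exp (x^2/2) * ((-1:ℝ)^n * Polynomial.aeval x (Polynomial.hermite n)
        * Real.exp (-(x^2/2)))
      = (((-1:ℝ)^n) * ((-1:ℝ)^n)) * (Real.exp (x^2/2) * Real.exp (-(x^2/2)))
        * Polynomial.aeval x (Polynomial.hermite n) := by ring
    _ = Polynomial.aeval x (Polynomial.hermite n) := by rw [h1, h2]; ring

lemma iteratedDeriv_cgauss (n : ℕ) (z : ℂ) :
    iteratedDeriv n (fun w : ℂ => Complex.exp (-(w^2/2))) z =
      (-1 : ℂ)^n * Polynomial.aeval z (Polynomial.hermite n) * Complex.exp (-(z^2/2)) := by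
  induction' n with n ih generalizing z
  · simp [iteratedDeriv_zero, Polynomial.hermite_zero]
  · replace ih : iteratedDeriv n (fun w : ℂ => Complex.exp (-(w^2/2))) = _ := funext ih
    have deriv_gaussian : ∀ w : ℂ,
        deriv (fun w : ℂ => Complex.exp (-(w^2/2))) w = -w * Complex.exp (-(w^2/2)) := by
      intro w
      have h1 : HasDerivAt (fun w : ℂ => -(w^2/2)) (-w) w := by
        have := ((hasDerivAt_pow 2 w).div_const 2).neg
        convert this using 1
        · rfl
        · rfl
        · funext y; rfl
        · norm_num
      rw [h1.cexp.deriv]; ring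
    rw [iteratedDeriv_succ, ih]
    have hfun : (fun x : ℂ => (-1:ℂ)^n * Polynomial.aeval x (Polynomial.hermite n)
          * Complex.exp (-(x^2/2)))
        = fun x : ℂ => (-1:ℂ)^n * (Polynomial.aeval x (Polynomial.hermite n)
          * Complex.exp (-(x^2/2))) := by
      funext y; ring
    rw [hfun, deriv_const_mul_field, deriv_fun_mul (Polynomial.differentiable_aeval _ z)
      (by fun_prop), Polynomial.deriv_aeval, deriv_gaussian, Polynomial.hermite_succ,
      map_sub, map_mul, Polynomial.aeval_X, pow_succ]
    ring

lemma aeval_complex (n : ℕ) (x : ℝ) :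
    Polynomial.aeval (x : ℂ) (Polynomial.hermite n)
      = ((Polynomial.aeval x (Polynomial.hermite n) : ℝ) : ℂ) := by
  have := Polynomial.aeval_algHom_apply (Complex.ofRealHom.toIntAlgHom) x (Polynomial.hermite n)
  simpa using this

lemma hermite_hasSum (c x : ℝ) :
    HasSum (fun n : ℕ => c ^ n / (n.factorial : ℝ) * hermite n x)
      (Real.exp (c * x - c ^ 2 / 2)) := by
  have hf : Differentiable ℂ (fun w : ℂ => Complex.exp (-(w^2/2))) := by fun_prop
  have H := Complex.hasSum_taylorSeries_of_entire hf (x : ℂ) ((x : ℂ) - (c : ℂ))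
  simp only [iteratedDeriv_cgauss, aeval_complex, smul_eq_mul] at H
  have H2 : HasSum (fun n : ℕ => ((c ^ n / (n.factorial : ℝ)
        * (Polynomial.aeval x (Polynomial.hermite n)) * Real.exp (-(x^2/2)) : ℝ) : ℂ))
      (((Real.exp (-((x - c)^2/2)) : ℝ) : ℂ)) := by
    convert H using 2 with n
    · rfl
    · have h2 : Complex.exp (-((x:ℂ)^2/2)) = ((Real.exp (-(x^2/2)) : ℝ) : ℂ) := by
        rw [Complex.ofReal_exp]; push_cast; ring_nf
      have key : ((x:ℂ) - c - x)^n * ((-1:ℂ)^n) = (c:ℂ)^n := by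
        rw [← mul_pow]; ring_nf
      rw [h2]
      calc (((c ^ n / (n.factorial : ℝ)
            * (Polynomial.aeval x (Polynomial.hermite n)) * Real.exp (-(x^2/2)) : ℝ)) : ℂ)
          = (c:ℂ)^n * (((n.factorial : ℂ))⁻¹
            * ((Polynomial.aeval x (Polynomial.hermite n) : ℝ) : ℂ)
            * ((Real.exp (-(x^2/2)) : ℝ) : ℂ)) := by
            push_cast; rw [div_eq_mul_inv]; ring
        _ = (((x:ℂ) - c - x)^n * ((-1:ℂ)^n)) * (((n.factorial : ℂ))⁻¹
            * ((Polynomial.aeval x (Polynomial.hermite n) : ℝ) : ℂ)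
            * ((Real.exp (-(x^2/2)) : ℝ) : ℂ)) := by rw [key]
        _ = _ := by ring
    · rw [Complex.ofReal_exp]; push_cast; ring_nf
  have Hr : HasSum (fun n : ℕ => c ^ n / (n.factorial : ℝ)
      * (Polynomial.aeval x (Polynomial.hermite n)) * Real.exp (-(x^2/2)))
      (Real.exp (-((x - c)^2/2))) := Complex.hasSum_ofReal.mp H2
  have Hr2 := Hr.mul_right (Real.exp (x^2/2))
  have e1 : Real.exp (-((x - c)^2/2)) * Real.exp (x^2/2) = Real.exp (c * x - c^2/2) := by
    rw [← Real.exp_add]; ring_nf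
  rw [e1] at Hr2
  convert Hr2 using 2 with n
  · rfl
  rw [hermite_eq_aeval]
  have h2 : Real.exp (-(x^2/2)) * Real.exp (x^2/2) = 1 := by
    rw [← Real.exp_add]; ring_nf; exact Real.exp_zero
  calc c ^ n / (n.factorial : ℝ) * Polynomial.aeval x (Polynomial.hermite n)
      = c ^ n / (n.factorial : ℝ) * Polynomial.aeval x (Polynomial.hermite n) * 1 := by ring
    _ = _ := by rw [← h2]; ring

/-- Exponential generating function of the Hermite polynomials:
exp(cx − c²/2) = Σ_n (cⁿ/n!)·h_n(x), with absolute convergence. -/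
theorem hermite_generating_function (c x : ℝ) :
    Summable (fun n : ℕ => |c ^ n / (n.factorial : ℝ) * hermite n x|) ∧
    HasSum (fun n : ℕ => c ^ n / (n.factorial : ℝ) * hermite n x)
      (Real.exp (c * x - c ^ 2 / 2)) := by
  refine ⟨?_, hermite_hasSum c x⟩
  set d : ℝ := 2 * |c| + 1 with hd
  have hd0 : 0 < d := by positivity
  have hcd : |c| / d < 1 := by
    rw [div_lt_one hd0]; have := abs_nonneg c; linarith
  have hkey := (hermite_hasSum d x).summable
  have h0 : Filter.Tendsto (fun n : ℕ => d ^ n / (n.factorial : ℝ) * hermite n x)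
      Filter.atTop (nhds 0) := hkey.tendsto_atTop_zero
  obtain ⟨M, hM⟩ := h0.abs.bddAbove_range.imp (fun M hMub => fun n => hMub (Set.mem_range_self n))
  have hbound : ∀ n : ℕ, |c ^ n / (n.factorial : ℝ) * hermite n x| ≤ M * (|c| / d) ^ n := by
    intro n
    have h1 : |c ^ n / (n.factorial : ℝ) * hermite n x|
        = |d ^ n / (n.factorial : ℝ) * hermite n x| * (|c| / d) ^ n := by
      rw [abs_mul, abs_mul, abs_div, abs_div, abs_pow, abs_pow, abs_of_pos hd0,
        Nat.abs_cast, div_pow]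
      field_simp
    rw [h1]
    have := hM n
    have hpow : (0:ℝ) ≤ (|c| / d) ^ n := by positivity
    exact mul_le_mul_of_nonneg_right this hpow
  exact Summable.of_nonneg_of_le (fun n => abs_nonneg _) hbound
    ((summable_geometric_of_lt_one (by positivity) hcd).mul_left M)
end

section
/- The family of indexed products (2ℕ)^{−qα} := Π_{j=1}^∞ (2j)^{−q·α_j} over all multi-indices α ∈ 𝒥 (sequences of nonnegative integers with finite support) is summable if and only if q > 1, i.e., Σ_{α ∈ 𝒥} (2ℕ)^{−qα} < ∞ exactly when q > 1. -/
/-!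
With `r j = (2 (j + 1))^(-q)` the weight of `α` is `∏ j, r j ^ α j`. On the unit multi-indices
`single j 1` it is the `p`-series `∑ j, r j`, which converges iff `q > 1`. Conversely, when
`∑ j, r j < ∞` and `0 ≤ r j < 1`, every finite partial sum is dominated by an Euler product:
`∏ j, ∑ k, r j ^ k = ∏ j, (1 - r j)⁻¹ ≤ exp (∑ j, r j / (1 - r j)) < ∞`.
-/

open Finset Real

theorem Finset.sum_finsupp_prod {ι α R : Type*} [Zero α] [CommSemiring R] (s : Finset ι)
    (t : ι → Finset α) (f : ι → α → R) :
    ∑ g ∈ s.finsupp t, ∏ i ∈ s, f i (g i) = ∏ i ∈ s, ∑ a ∈ t i, f i a := by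
  classical
  rw [prod_sum, Finset.finsupp, sum_map]
  refine sum_congr rfl fun p _ => ?_
  rw [← prod_attach]
  refine prod_congr rfl fun i _ => ?_
  simp [Finsupp.indicator_of_mem i.2]

theorem Finsupp.mem_finsupp_range_of_le {ι : Type*} {α β : ι →₀ ℕ} (h : α ≤ β) :
    α ∈ β.support.finsupp fun i => range (β i + 1) :=
  mem_finsupp_iff.2 ⟨Finsupp.support_mono h, fun i _ => mem_range.2 (Nat.lt_succ_of_le (h i))⟩

theorem Real.one_div_one_sub_le_exp_div {x : ℝ} (hx : x < 1) :
    1 / (1 - x) ≤ exp (x / (1 - x)) := by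
  have hpos : 0 < 1 - x := by linarith
  calc 1 / (1 - x) = (1 / (1 - x) - 1) + 1 := by ring
    _ ≤ exp (1 / (1 - x) - 1) := add_one_le_exp _
    _ = exp (x / (1 - x)) := by congr 1; field_simp; ring

theorem Summable.div_one_sub {ι : Type*} {r : ι → ℝ} (hs : Summable r)
    (h0 : ∀ i, 0 ≤ r i) :
    Summable fun i => r i / (1 - r i) := by
  refine (hs.mul_left 2).of_norm_bounded_eventually ?_
  filter_upwards [hs.tendsto_cofinite_zero.eventually (gt_mem_nhds one_half_pos)]
    with i hi
  have hpos : 0 < 1 - r i := by linarith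
  rw [Real.norm_of_nonneg (div_nonneg (h0 i) hpos.le), div_le_iff₀ hpos]
  nlinarith [h0 i]

theorem summable_finsupp_prod_pow {ι : Type*} {r : ι → ℝ} (h0 : ∀ i, 0 ≤ r i)
    (h1 : ∀ i, r i < 1) (hs : Summable r) :
    Summable fun α : ι →₀ ℕ => α.prod fun i k => r i ^ k := by
  refine summable_of_sum_le (c := exp (∑' i, r i / (1 - r i)))
    (fun α => prod_nonneg fun i _ => pow_nonneg (h0 i) _) fun u => ?_
  set β := u.sup id
  calc ∑ α ∈ u, α.prod (fun i k => r i ^ k)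
      ≤ ∑ α ∈ β.support.finsupp (fun i => range (β i + 1)), α.prod (fun i k => r i ^ k) :=
        sum_le_sum_of_subset_of_nonneg
          (fun α hα => Finsupp.mem_finsupp_range_of_le (le_sup (f := id) hα))
          fun α _ _ => prod_nonneg fun i _ => pow_nonneg (h0 i) _
    _ = ∏ i ∈ β.support, ∑ k ∈ range (β i + 1), r i ^ k := by
        rw [← sum_finsupp_prod]
        refine sum_congr rfl fun α hα => ?_
        exact Finsupp.prod_of_support_subset _ (mem_finsupp_iff.1 hα).1 _ fun i _ => pow_zero _
    _ ≤ ∏ i ∈ β.support, exp (r i / (1 - r i)) := by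
        refine prod_le_prod (fun i _ => sum_nonneg fun k _ => pow_nonneg (h0 i) k) fun i _ => ?_
        calc ∑ k ∈ range (β i + 1), r i ^ k ≤ r i ^ 0 / (1 - r i) := by
              rw [range_eq_Ico]; exact geom_sum_Ico_le_of_lt_one (h0 i) (h1 i)
          _ ≤ exp (r i / (1 - r i)) := by
              rw [pow_zero]; exact one_div_one_sub_le_exp_div (h1 i)
    _ = exp (∑ i ∈ β.support, r i / (1 - r i)) := (exp_sum _ _).symm
    _ ≤ exp (∑' i, r i / (1 - r i)) :=
        exp_le_exp.2 <| (hs.div_one_sub h0).sum_le_tsum _ fun i _ =>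
          div_nonneg (h0 i) (sub_nonneg.2 (h1 i).le)

theorem Real.summable_mul_natCast_add_one_rpow_neg_iff {a : ℝ} (ha : 0 < a) (q : ℝ) :
    Summable (fun n : ℕ => (a * ((n : ℝ) + 1)) ^ (-q)) ↔ 1 < q := by
  simp_rw [mul_rpow ha.le (Nat.cast_add_one_pos _).le]
  rw [summable_mul_left_iff (rpow_pos_of_pos ha _).ne']
  have hshift := summable_nat_add_iff (f := fun n : ℕ => (n : ℝ) ^ (-q)) 1
  push_cast at hshift
  rw [hshift, summable_nat_rpow, neg_lt_neg_iff]

/-- The weights (2ℕ)^{−qα} = Π_j (2j)^{−q·α_j} over multi-indices α ∈ 𝒥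
(finitely supported sequences of nonnegative integers, indexed by j = 1,2,…)
are summable if and only if q > 1. -/
theorem summable_two_nat_weights (q : ℝ) :
    Summable (fun α : ℕ →₀ ℕ =>
        ∏ j ∈ α.support, ((2 * ((j : ℝ) + 1)) ^ (-(q * (α j : ℝ))) : ℝ))
      ↔ 1 < q := by
  set r : ℕ → ℝ := fun j => (2 * ((j : ℝ) + 1)) ^ (-q)
  have hbase (j : ℕ) : 1 < 2 * ((j : ℝ) + 1) := by
    linarith [(Nat.cast_nonneg j : (0 : ℝ) ≤ j)]
  have hweight (j k : ℕ) : (2 * ((j : ℝ) + 1)) ^ (-(q * k)) = r j ^ k := by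
    rw [← rpow_natCast, ← rpow_mul (zero_lt_one.trans (hbase j)).le, neg_mul]
  have hr : Summable r ↔ 1 < q := summable_mul_natCast_add_one_rpow_neg_iff two_pos q
  change Summable (fun α : ℕ →₀ ℕ => α.prod fun j k => (2 * ((j : ℝ) + 1)) ^ (-(q * k)))
    ↔ 1 < q
  simp_rw [hweight]
  constructor
  · intro hsum
    refine hr.1 ?_
    simpa [Function.comp_def, Finsupp.prod_single_index] using
      hsum.comp_injective (Finsupp.single_left_injective one_ne_zero)
  · intro hq
    exact summable_finsupp_prod_pow
      (fun j => (rpow_pos_of_pos (zero_lt_one.trans (hbase j)) _).le)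
      (fun j => rpow_lt_one_of_one_lt_of_neg (hbase j) (by linarith)) (hr.2 hq)
end
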